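/- (Phase-transition threshold.) Let S be a nonempty finite set, let P and P̂ be two transition kernels assigning to each state-action pair a probability mass function on S, let π : S → A be a deterministic policy, let γ ∈ (0,1), let G ⊆ S be a goal region, and let R_thresh > 0. If IPM(P(·|s,a), P̂(·|s,a)) ≤ ε for all (s,a) and ε ≤ (1−γ)² · R_thresh / (2γ), then for every rollout horizon τ ≥ 0 and initial state s0, the imagined return satisfies R̂_τ ≥ R*_τ − R_thresh, where R*_τ = ∑_{ℓ=0}^τ γ^ℓ μ_ℓ(G) and R̂_τ = ∑_{ℓ=0}^τ γ^ℓ μ̂_ℓ(G) with μ_ℓ, μ̂_ℓ the ℓ-step state distributions from s0 following π under P and P̂ respectively. -/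

import Mathlib

open Finset

/-- `p` is a probability mass function on the finite type `S`. -/
def IsPMF {S : Type*} [Fintype S] (p : S → ℝ) : Prop :=
  (∀ s, 0 ≤ p s) ∧ ∑ s, p s = 1

/-- Integral probability metric over the unit-sup-norm function class. -/
noncomputable def IPM {S : Type*} [Fintype S] (p q : S → ℝ) : ℝ :=
  sSup {x : ℝ | ∃ f : S → ℝ, (∀ s, |f s| ≤ 1) ∧
    x = |∑ s, f s * p s - ∑ s, f s * q s|}

/-- The distribution of the state after `ℓ` steps starting from `s0`,
following the deterministic policy `π` under the kernel `P`:
`μ_0 = δ_{s0}` and `μ_{ℓ+1}(s') = ∑_s μ_ℓ(s) P(s'|s,π(s))`. -/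
noncomputable def stateDist {S A : Type*} [Fintype S] [DecidableEq S]
    (P : S → A → S → ℝ) (π : S → A) (s0 : S) : ℕ → S → ℝ
  | 0 => fun s => if s = s0 then 1 else 0
  | (t + 1) => fun s' => ∑ s, stateDist P π s0 t s * P s (π s) s'

/-!
Simulation lemma: one step of the two kernels moves the expectation of a test function
`|f| ≤ 1` by at most `ε`, and the rest of the discrepancy is the previous step's discrepancy
tested against the new function `s ↦ ∑ s', f s' P̂(s'|s,π(s))`, again bounded by one.
Hence after `ℓ` steps the distributions are `ℓ ε` apart in IPM, and the discounted returns
differ by at most `ε ∑ ℓ γ^ℓ ≤ ε γ / (1 - γ)²`, which is at most `R_thresh / 2`.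
-/

section PMF

variable {S : Type*} [Fintype S] {p q : S → ℝ}

theorem IsPMF.abs_sum_mul_le (hp : IsPMF p) {f : S → ℝ} {C : ℝ} (hf : ∀ s, |f s| ≤ C) :
    |∑ s, f s * p s| ≤ C :=
  calc |∑ s, f s * p s| ≤ ∑ s, |f s| * p s := by
        simpa only [abs_mul, abs_of_nonneg (hp.1 _)] using abs_sum_le_sum_abs (fun s => f s * p s) univ
    _ ≤ ∑ s, C * p s := sum_le_sum fun s _ => mul_le_mul_of_nonneg_right (hf s) (hp.1 s)
    _ = C := by rw [← mul_sum, hp.2, mul_one]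

theorem abs_sum_mul_sub_le_IPM (hp : IsPMF p) (hq : IsPMF q) {f : S → ℝ}
    (hf : ∀ s, |f s| ≤ 1) : |∑ s, f s * p s - ∑ s, f s * q s| ≤ IPM p q := by
  refine le_csSup ⟨2, ?_⟩ ⟨f, hf, rfl⟩
  rintro x ⟨g, hg, rfl⟩
  have hgp := hp.abs_sum_mul_le hg
  have hgq := hq.abs_sum_mul_le hg
  linarith [abs_sub (∑ s, g s * p s) (∑ s, g s * q s)]

theorem IPM_nonneg (hp : IsPMF p) (hq : IsPMF q) : 0 ≤ IPM p q :=
  (abs_nonneg _).trans (abs_sum_mul_sub_le_IPM (f := 0) hp hq fun _ => by simp)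

end PMF

section StateDist

variable {S A : Type*} [Fintype S] [DecidableEq S] {P Phat : S → A → S → ℝ} {π : S → A} {s0 : S}

theorem isPMF_stateDist (hP : ∀ s a, IsPMF (P s a)) (ℓ : ℕ) : IsPMF (stateDist P π s0 ℓ) := by
  induction ℓ with
  | zero =>
    refine ⟨fun s => ?_, by simp [stateDist]⟩
    simp only [stateDist]
    split_ifs <;> norm_num
  | succ t ih =>
    refine ⟨fun s' => sum_nonneg fun s _ => mul_nonneg (ih.1 s) ((hP s (π s)).1 s'), ?_⟩
    simp only [stateDist]
    rw [sum_comm]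
    simp only [← mul_sum, (hP _ _).2, mul_one, ih.2]

theorem sum_mul_stateDist_succ (f : S → ℝ) (t : ℕ) :
    ∑ s', f s' * stateDist P π s0 (t + 1) s' =
      ∑ s, stateDist P π s0 t s * ∑ s', f s' * P s (π s) s' := by
  simp only [stateDist, mul_sum]
  rw [sum_comm]
  exact sum_congr rfl fun s _ => sum_congr rfl fun s' _ => by ring

theorem abs_sum_mul_stateDist_sub_le {ε : ℝ} (hP : ∀ s a, IsPMF (P s a))
    (hPhat : ∀ s a, IsPMF (Phat s a)) (hIPM : ∀ s a, IPM (P s a) (Phat s a) ≤ ε) (ℓ : ℕ)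
    {f : S → ℝ} (hf : ∀ s, |f s| ≤ 1) :
    |∑ s, f s * stateDist P π s0 ℓ s - ∑ s, f s * stateDist Phat π s0 ℓ s| ≤ ℓ * ε := by
  induction ℓ generalizing f with
  | zero => simp [stateDist]
  | succ t ih =>
    set μ := stateDist P π s0 t
    set ν := stateDist Phat π s0 t
    set g : S → ℝ := fun s => ∑ s', f s' * P s (π s) s'
    set ghat : S → ℝ := fun s => ∑ s', f s' * Phat s (π s) s'
    have hstep : |∑ s, (g s - ghat s) * μ s| ≤ ε :=
      (isPMF_stateDist hP t).abs_sum_mul_le fun s =>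
        (abs_sum_mul_sub_le_IPM (hP s (π s)) (hPhat s (π s)) hf).trans (hIPM s (π s))
    have hprev : |∑ s, ghat s * μ s - ∑ s, ghat s * ν s| ≤ t * ε :=
      ih fun s => (hPhat s (π s)).abs_sum_mul_le hf
    have hsplit : ∑ s, μ s * g s - ∑ s, ν s * ghat s =
        ∑ s, (g s - ghat s) * μ s + (∑ s, ghat s * μ s - ∑ s, ghat s * ν s) := by
      simp only [← sum_sub_distrib, ← sum_add_distrib]
      exact sum_congr rfl fun s _ => by ring
    rw [sum_mul_stateDist_succ, sum_mul_stateDist_succ, hsplit]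
    push_cast
    linarith [abs_add_le (∑ s, (g s - ghat s) * μ s) (∑ s, ghat s * μ s - ∑ s, ghat s * ν s)]

theorem sum_stateDist_sub_le {ε : ℝ} (hP : ∀ s a, IsPMF (P s a))
    (hPhat : ∀ s a, IsPMF (Phat s a)) (hIPM : ∀ s a, IPM (P s a) (Phat s a) ≤ ε)
    (G : Finset S) (ℓ : ℕ) :
    ∑ s ∈ G, stateDist P π s0 ℓ s - ∑ s ∈ G, stateDist Phat π s0 ℓ s ≤ ℓ * ε := by
  have hG : ∀ p : S → ℝ, ∑ s, (if s ∈ G then 1 else 0) * p s = ∑ s ∈ G, p s := fun p => by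
    simp [ite_mul, sum_ite_mem]
  have h := abs_sum_mul_stateDist_sub_le (π := π) (s0 := s0) hP hPhat hIPM ℓ
    (f := fun s => if s ∈ G then 1 else 0) fun s => by split_ifs <;> simp
  rw [hG, hG] at h
  exact (le_abs_self _).trans h

end StateDist

theorem sum_range_natCast_mul_pow_le {γ : ℝ} (hγ0 : 0 ≤ γ) (hγ1 : γ < 1) (n : ℕ) :
    ∑ ℓ ∈ range n, (ℓ : ℝ) * γ ^ ℓ ≤ γ / (1 - γ) ^ 2 :=
  sum_le_hasSum _ (fun ℓ _ => by positivity)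
    (hasSum_coe_mul_geometric_of_norm_lt_one (by rwa [Real.norm_of_nonneg hγ0]))

theorem phase_transition_threshold_general
    {S A : Type*} [Fintype S] [DecidableEq S]
    (P Phat : S → A → S → ℝ) (γ ε Rthresh : ℝ)
    (hP : ∀ s a, IsPMF (P s a)) (hPhat : ∀ s a, IsPMF (Phat s a))
    (π : S → A)
    (hγ0 : 0 < γ) (hγ1 : γ < 1)
    (G : Finset S)
    (hIPM : ∀ s a, IPM (P s a) (Phat s a) ≤ ε)
    (hε : ε ≤ (1 - γ) ^ 2 * Rthresh / (2 * γ)) :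
    ∀ (τ : ℕ) (s0 : S),
      ∑ ℓ ∈ Finset.range (τ + 1), γ ^ ℓ * ∑ s ∈ G, stateDist Phat π s0 ℓ s ≥
        (∑ ℓ ∈ Finset.range (τ + 1), γ ^ ℓ * ∑ s ∈ G, stateDist P π s0 ℓ s) -
          Rthresh := by
  intro τ s0
  have hε0 : 0 ≤ ε := (IPM_nonneg (hP s0 (π s0)) (hPhat s0 (π s0))).trans (hIPM s0 (π s0))
  have hεγ : γ / (1 - γ) ^ 2 * ε ≤ Rthresh / 2 := by
    have h1γ : 0 < (1 - γ) ^ 2 := by nlinarith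
    rw [le_div_iff₀ (by positivity)] at hε
    rw [div_mul_eq_mul_div, div_le_iff₀ h1γ]
    linarith
  have hreturn := calc
    ∑ ℓ ∈ range (τ + 1), γ ^ ℓ * ∑ s ∈ G, stateDist P π s0 ℓ s -
        ∑ ℓ ∈ range (τ + 1), γ ^ ℓ * ∑ s ∈ G, stateDist Phat π s0 ℓ s
        = ∑ ℓ ∈ range (τ + 1), γ ^ ℓ *
            (∑ s ∈ G, stateDist P π s0 ℓ s - ∑ s ∈ G, stateDist Phat π s0 ℓ s) := by
          rw [← sum_sub_distrib]
          exact sum_congr rfl fun ℓ _ => (mul_sub _ _ _).symm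
    _ ≤ ∑ ℓ ∈ range (τ + 1), γ ^ ℓ * (ℓ * ε) := by
          gcongr with ℓ
          exact sum_stateDist_sub_le hP hPhat hIPM G ℓ
    _ = (∑ ℓ ∈ range (τ + 1), (ℓ : ℝ) * γ ^ ℓ) * ε := by
          rw [sum_mul]
          exact sum_congr rfl fun ℓ _ => by ring
    _ ≤ γ / (1 - γ) ^ 2 * ε := by
          gcongr
          exact sum_range_natCast_mul_pow_le hγ0.le hγ1 _
  have hRthresh : 0 ≤ Rthresh := by
    have : 0 ≤ γ / (1 - γ) ^ 2 * ε := by positivity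
    linarith
  linarith

/-- **Phase-transition threshold.** If the uniform per-step IPM error `ε` is below
the threshold `(1-γ)² · R_thresh / (2γ)`, then for every rollout horizon `τ` and
initial state `s0` the imagined return for the sparse indicator reward `1[s ∈ G]`
satisfies `R̂_τ ≥ R*_τ − R_thresh`. -/
theorem phase_transition_threshold
    {S A : Type*} [Fintype S] [DecidableEq S] [Nonempty S]
    (P Phat : S → A → S → ℝ) (γ ε Rthresh : ℝ)
    (hP : ∀ s a, IsPMF (P s a)) (hPhat : ∀ s a, IsPMF (Phat s a))
    (π : S → A)
    (hγ0 : 0 < γ) (hγ1 : γ < 1)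
    (G : Finset S)
    (hRthresh : 0 < Rthresh)
    (hIPM : ∀ s a, IPM (P s a) (Phat s a) ≤ ε)
    (hε : ε ≤ (1 - γ) ^ 2 * Rthresh / (2 * γ)) :
    ∀ (τ : ℕ) (s0 : S),
      ∑ ℓ ∈ Finset.range (τ + 1), γ ^ ℓ * ∑ s ∈ G, stateDist Phat π s0 ℓ s ≥
        (∑ ℓ ∈ Finset.range (τ + 1), γ ^ ℓ * ∑ s ∈ G, stateDist P π s0 ℓ s) -
          Rthresh :=
  phase_transition_threshold_general P Phat γ ε Rthresh hP hPhat π hγ0 hγ1 G hIPM hε
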